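/- (The explicit generators realize the Poincaré algebra.) Fix κ > 0 and define on Γ the ten functions P_0, P_a, J_ab, J_a0 (a,b ∈ {1,2,3}) as in the context, extended to an antisymmetric family J_{μν} (μ,ν ∈ {0,1,2,3}) by J_{0a} := −J_{a0} and J_{μμ} := 0. Then with η = diag(−1,1,1,1) these functions satisfy the Poisson bracket relations of the Poincaré algebra: {P_μ, P_ν} = 0; {J_{μν}, P_ρ} = η_{μρ}P_ν − η_{νρ}P_μ; and {J_{μν}, J_{ρσ}} = η_{μρ}J_{νσ} − η_{νρ}J_{μσ} − η_{μσ}J_{νρ} + η_{νσ}J_{μρ}, for all μ,ν,ρ,σ ∈ {0,1,2,3}. -/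

import Mathlib

noncomputable section

open Finset

abbrev R3 := Fin 3 → ℝ

/-- The spin phase space Γ = ℝ³ × ℝ³ × ℝ³ with points (x, p, s). -/
abbrev Phase := R3 × R3 × R3

/-- Euclidean dot product on ℝ³. -/
def dot3 (v w : R3) : ℝ := ∑ a, v a * w a

/-- Euclidean norm on ℝ³. -/
def norm3 (v : R3) : ℝ := Real.sqrt (dot3 v v)

/-- Cross product on ℝ³. -/
def cross3 (v w : R3) : R3 :=
  ![v 1 * w 2 - v 2 * w 1, v 2 * w 0 - v 0 * w 2, v 0 * w 1 - v 1 * w 0]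

/-- Kronecker delta. -/
def kdelta (a b : Fin 3) : ℝ := if a = b then 1 else 0

/-- Sign of an integer, valued in ℝ. -/
def isgn (x : ℤ) : ℝ := if 0 < x then 1 else if x < 0 then -1 else 0

/-- Totally antisymmetric symbol on three indices with ε₀₁₂ = +1. -/
def eps3 (a b c : Fin 3) : ℝ :=
  isgn (((b : ℕ) : ℤ) - ((a : ℕ) : ℤ)) * isgn (((c : ℕ) : ℤ) - ((a : ℕ) : ℤ)) *
  isgn (((c : ℕ) : ℤ) - ((b : ℕ) : ℤ))

/-- Gradient of f with respect to x. -/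
def dX (f : Phase → ℝ) (γ : Phase) : R3 := fun a => fderiv ℝ f γ (Pi.single a 1, 0, 0)

/-- Gradient of f with respect to p. -/
def dP (f : Phase → ℝ) (γ : Phase) : R3 := fun a => fderiv ℝ f γ (0, Pi.single a 1, 0)

/-- Gradient of f with respect to s. -/
def dS (f : Phase → ℝ) (γ : Phase) : R3 := fun a => fderiv ℝ f γ (0, 0, Pi.single a 1)

/-- Poisson bracket {f,g} = ∇ₓf·∇ₚg − ∇ₚf·∇ₓg + s·(∇ₛf × ∇ₛg) on Γ. -/
def pb (f g : Phase → ℝ) (γ : Phase) : ℝ :=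
  dot3 (dX f γ) (dP g γ) - dot3 (dP f γ) (dX g γ)
    + dot3 γ.2.2 (cross3 (dS f γ) (dS g γ))

/-- Generator of spatial translations: P_a(x,p,s) = p_a. -/
def Pgen (a : Fin 3) : Phase → ℝ := fun γ => γ.2.1 a

/-- Generator of rotations: J_ab(x,p,s) = x_a p_b − x_b p_a + ε_{abc} s_c. -/
def Jgen (a b : Fin 3) : Phase → ℝ :=
  fun γ => γ.1 a * γ.2.1 b - γ.1 b * γ.2.1 a + ∑ c, eps3 a b c * γ.2.2 c

/-- Generator of time translations: P₀(x,p,s) = −√(κ² + |p|²). -/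
def P0gen (κ : ℝ) : Phase → ℝ := fun γ => -Real.sqrt (κ ^ 2 + dot3 γ.2.1 γ.2.1)

/-- Generator of boosts: J_{a0}(x,p,s) = P₀ x_a − (p × s)_a/(κ − P₀). -/
def Jboost (κ : ℝ) (a : Fin 3) : Phase → ℝ :=
  fun γ => P0gen κ γ * γ.1 a - cross3 γ.2.1 γ.2.2 a / (κ - P0gen κ γ)

/-- The four translation generators (P₀, P₁, P₂, P₃). -/
def P4 (κ : ℝ) : Fin 4 → Phase → ℝ :=
  ![P0gen κ, Pgen 0, Pgen 1, Pgen 2]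

/-- The antisymmetric family J_{μν} of Lorentz generators, with J_{0a} = −J_{a0}
and vanishing diagonal. -/
def J4 (κ : ℝ) : Fin 4 → Fin 4 → Phase → ℝ :=
  ![![fun _ => 0, fun γ => -Jboost κ 0 γ, fun γ => -Jboost κ 1 γ, fun γ => -Jboost κ 2 γ],
    ![Jboost κ 0, fun _ => 0, Jgen 0 1, Jgen 0 2],
    ![Jboost κ 1, Jgen 1 0, fun _ => 0, Jgen 1 2],
    ![Jboost κ 2, Jgen 2 0, Jgen 2 1, fun _ => 0]]

/-- Minkowski metric η = diag(−1,1,1,1). -/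
def eta4 (μ ν : Fin 4) : ℝ := if μ = ν then (if μ = 0 then -1 else 1) else 0


/-!
All generators are linear in a direction vector: `P(u) = u·p`,
`J(u,v) = (u·x)(v·p) − (v·x)(u·p) + s·(u×v)` and `K(u) = −E (u·x) − u·(p×s)/(κ+E)` with
`E = √(κ² + |p|²)`; `P_a`, `J_ab`, `J_a0` are their values at the standard basis vectors
`kdelta a`. The gradients of `P(u)`, `J(u,v)`, `K(u)`, `P₀` are explicit, so each bracket becomes
an identity in ℝ³ holding for all directions at once, i.e. the covariant form of the Poincaré
relations. All but `{K(u), K(v)} = −J(u,v)` are polynomial identities; in that one the spin terms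
cancel because `|p|² = (E − κ)(E + κ)`.
-/

@[simp] lemma dot3_zero_left (v : R3) : dot3 0 v = 0 := by
  simp [dot3]

@[simp] lemma dot3_zero_right (v : R3) : dot3 v 0 = 0 := by
  simp [dot3]

@[simp] lemma dot3_kdelta_left (a : Fin 3) (v : R3) : dot3 (kdelta a) v = v a := by
  simp [dot3, kdelta]

lemma dot3_comm (v w : R3) : dot3 v w = dot3 w v := by
  simp only [dot3, mul_comm]

lemma dot3_self_nonneg (v : R3) : 0 ≤ dot3 v v :=
  Finset.sum_nonneg fun a _ => mul_self_nonneg (v a)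

@[simp] lemma cross3_zero_left (v : R3) : cross3 0 v = 0 := by
  ext a; fin_cases a <;> simp [cross3]

lemma kdelta_comm (a b : Fin 3) : kdelta a b = kdelta b a := by
  simp only [kdelta, eq_comm]

section PoissonBracket

variable (f g : Phase → ℝ) (γ : Phase)

lemma pb_anticomm : pb g f γ = -pb f g γ := by
  simp only [pb, dot3, cross3, Fin.sum_univ_three, Matrix.cons_val_zero, Matrix.cons_val_one,
    Matrix.cons_val_two, Matrix.head_cons, Matrix.tail_cons]
  ring

lemma pb_self : pb f f γ = 0 := by
  linarith [pb_anticomm f f γ]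

lemma pb_const_left (c : ℝ) : pb (fun _ => c) g γ = 0 := by
  simp [pb, dX, dP, dS, dot3, cross3, Fin.sum_univ_three]

lemma pb_const_right (c : ℝ) : pb f (fun _ => c) γ = 0 := by
  rw [pb_anticomm, pb_const_left, neg_zero]

lemma pb_neg_left : pb (fun γ => -f γ) g γ = -pb f g γ := by
  simp only [pb, dX, dP, dS, fderiv_fun_neg, neg_apply, dot3, cross3,
    Fin.sum_univ_three, Matrix.cons_val_zero, Matrix.cons_val_one, Matrix.cons_val_two,
    Matrix.head_cons, Matrix.tail_cons]
  ring

lemma pb_neg_right : pb f (fun γ => -g γ) γ = -pb f g γ := by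
  rw [pb_anticomm, pb_neg_left, pb_anticomm g f, neg_neg]

end PoissonBracket

def coordX (a : Fin 3) : Phase →L[ℝ] ℝ :=
  (ContinuousLinearMap.proj a).comp (ContinuousLinearMap.fst ℝ R3 (R3 × R3))

def coordP (a : Fin 3) : Phase →L[ℝ] ℝ :=
  (ContinuousLinearMap.proj a).comp
    ((ContinuousLinearMap.fst ℝ R3 R3).comp (ContinuousLinearMap.snd ℝ R3 (R3 × R3)))

def coordS (a : Fin 3) : Phase →L[ℝ] ℝ :=
  (ContinuousLinearMap.proj a).comp
    ((ContinuousLinearMap.snd ℝ R3 R3).comp (ContinuousLinearMap.snd ℝ R3 (R3 × R3)))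

@[simp] lemma coordX_apply (a : Fin 3) (v : Phase) : coordX a v = v.1 a := rfl
@[simp] lemma coordP_apply (a : Fin 3) (v : Phase) : coordP a v = v.2.1 a := rfl
@[simp] lemma coordS_apply (a : Fin 3) (v : Phase) : coordS a v = v.2.2 a := rfl

/-- A function with derivative `pairing w` at `γ` has gradients `(dX, dP, dS) = w` there. -/
def pairing (w : Phase) : Phase →L[ℝ] ℝ :=
  ∑ e, (w.1 e • coordX e + w.2.1 e • coordP e + w.2.2 e • coordS e)

lemma pairing_apply (w v : Phase) :
    pairing w v = dot3 w.1 v.1 + dot3 w.2.1 v.2.1 + dot3 w.2.2 v.2.2 := by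
  simp [pairing, dot3, Finset.sum_add_distrib]

lemma hasFDerivAt_pairing {f : Phase → ℝ} {w : Phase} (hf : ∀ γ, f γ = pairing w γ)
    (γ : Phase) : HasFDerivAt f (pairing w) γ :=
  funext hf ▸ (pairing w).hasFDerivAt

lemma pb_eq_of_hasFDerivAt {f g : Phase → ℝ} {w w' γ : Phase}
    (hf : HasFDerivAt f (pairing w) γ) (hg : HasFDerivAt g (pairing w') γ) :
    pb f g γ = dot3 w.1 w'.2.1 - dot3 w.2.1 w'.1 + dot3 γ.2.2 (cross3 w.2.2 w'.2.2) := by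
  have grad : ∀ {h : Phase → ℝ} {w : Phase}, HasFDerivAt h (pairing w) γ →
      dX h γ = w.1 ∧ dP h γ = w.2.1 ∧ dS h γ = w.2.2 := fun hh => by
    refine ⟨funext fun e => ?_, funext fun e => ?_, funext fun e => ?_⟩ <;>
      simp [dX, dP, dS, hh.fderiv, pairing_apply, dot3, Pi.single_apply]
  obtain ⟨hfX, hfP, hfS⟩ := grad hf
  obtain ⟨hgX, hgP, hgS⟩ := grad hg
  rw [pb, hfX, hfP, hfS, hgX, hgP, hgS]

def momentum (u : R3) : Phase → ℝ := fun γ => dot3 u γ.2.1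

def angularMomentum (u v : R3) : Phase → ℝ := fun γ =>
  dot3 u γ.1 * dot3 v γ.2.1 - dot3 v γ.1 * dot3 u γ.2.1 + dot3 γ.2.2 (cross3 u v)

def energy (κ : ℝ) (γ : Phase) : ℝ := √(κ ^ 2 + dot3 γ.2.1 γ.2.1)

lemma energy_sq (κ : ℝ) (γ : Phase) : energy κ γ ^ 2 = κ ^ 2 + dot3 γ.2.1 γ.2.1 :=
  Real.sq_sqrt (add_nonneg (sq_nonneg κ) (dot3_self_nonneg _))

def boost (κ : ℝ) (u : R3) : Phase → ℝ := fun γ =>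
  -energy κ γ * dot3 u γ.1 - dot3 u (cross3 γ.2.1 γ.2.2) / (κ + energy κ γ)

section Gradients

variable {κ : ℝ} (γ : Phase)

lemma energy_sq_pos (hκ : κ ≠ 0) : 0 < κ ^ 2 + dot3 γ.2.1 γ.2.1 :=
  add_pos_of_pos_of_nonneg (by positivity) (dot3_self_nonneg _)

lemma energy_pos (hκ : κ ≠ 0) : 0 < energy κ γ :=
  Real.sqrt_pos.2 (energy_sq_pos γ hκ)

lemma hasFDerivAt_dot3_x (u : R3) :
    HasFDerivAt (fun γ : Phase => dot3 u γ.1) (pairing (u, 0, 0)) γ :=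
  hasFDerivAt_pairing (fun γ => by simp [pairing_apply]) γ

lemma hasFDerivAt_dot3_p (u : R3) :
    HasFDerivAt (fun γ : Phase => dot3 u γ.2.1) (pairing (0, u, 0)) γ :=
  hasFDerivAt_pairing (fun γ => by simp [pairing_apply]) γ

lemma hasFDerivAt_dot3_s (u : R3) :
    HasFDerivAt (fun γ : Phase => dot3 γ.2.2 u) (pairing (0, 0, u)) γ :=
  hasFDerivAt_pairing (fun γ => by simp [pairing_apply, dot3_comm γ.2.2]) γ

lemma hasFDerivAt_dot3_cross3 (u : R3) :
    HasFDerivAt (fun γ : Phase => dot3 u (cross3 γ.2.1 γ.2.2))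
      (pairing (0, cross3 γ.2.2 u, cross3 u γ.2.1)) γ := by
  have hcoord : (fun γ : Phase => dot3 u (cross3 γ.2.1 γ.2.2)) = fun γ =>
      u 0 * (coordP 1 γ * coordS 2 γ - coordP 2 γ * coordS 1 γ)
        + u 1 * (coordP 2 γ * coordS 0 γ - coordP 0 γ * coordS 2 γ)
        + u 2 * (coordP 0 γ * coordS 1 γ - coordP 1 γ * coordS 0 γ) := by
    funext γ; simp [dot3, cross3, Fin.sum_univ_three]
  have hp := fun i => (coordP i).hasFDerivAt (x := γ)
  have hs := fun i => (coordS i).hasFDerivAt (x := γ)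
  rw [hcoord]
  refine (((((hp 1).mul (hs 2)).sub ((hp 2).mul (hs 1))).const_mul (u 0)).add
    ((((hp 2).mul (hs 0)).sub ((hp 0).mul (hs 2))).const_mul (u 1)) |>.add
    ((((hp 0).mul (hs 1)).sub ((hp 1).mul (hs 0))).const_mul (u 2))).congr_fderiv
    (ContinuousLinearMap.ext fun w => ?_)
  simp [pairing_apply, dot3, cross3, Fin.sum_univ_three]
  ring

lemma hasFDerivAt_momentum (u : R3) : HasFDerivAt (momentum u) (pairing (0, u, 0)) γ :=
  hasFDerivAt_dot3_p γ u

lemma hasFDerivAt_angularMomentum (u v : R3) :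
    HasFDerivAt (angularMomentum u v)
      (pairing (dot3 v γ.2.1 • u - dot3 u γ.2.1 • v, dot3 u γ.1 • v - dot3 v γ.1 • u,
        cross3 u v)) γ := by
  refine ((((hasFDerivAt_dot3_x γ u).mul (hasFDerivAt_dot3_p γ v)).sub
    ((hasFDerivAt_dot3_x γ v).mul (hasFDerivAt_dot3_p γ u))).add
    (hasFDerivAt_dot3_s γ (cross3 u v))).congr_fderiv (ContinuousLinearMap.ext fun w => ?_)
  simp [pairing_apply, dot3, Fin.sum_univ_three]
  ring

lemma hasFDerivAt_energy (hκ : κ ≠ 0) :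
    HasFDerivAt (energy κ) (pairing (0, (energy κ γ)⁻¹ • γ.2.1, 0)) γ := by
  have hq : HasFDerivAt (fun γ : Phase => κ ^ 2 + dot3 γ.2.1 γ.2.1)
      (pairing (0, 2 • γ.2.1, 0)) γ :=
    ((HasFDerivAt.fun_sum fun e _ => (coordP e).hasFDerivAt.mul
      (coordP e).hasFDerivAt).const_add _).congr_fderiv
      (ContinuousLinearMap.ext fun w => by simp [pairing_apply, dot3, Fin.sum_univ_three]; ring)
  refine (hq.sqrt (energy_sq_pos γ hκ).ne').congr_fderiv
    (ContinuousLinearMap.ext fun w => ?_)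
  change 1 / (2 * energy κ γ) * pairing _ w = pairing _ w
  simp [pairing_apply, dot3, Fin.sum_univ_three]
  field_simp

lemma hasFDerivAt_P0gen (hκ : κ ≠ 0) :
    HasFDerivAt (P0gen κ) (pairing (0, -(energy κ γ)⁻¹ • γ.2.1, 0)) γ :=
  (hasFDerivAt_energy γ hκ).neg.congr_fderiv
    (ContinuousLinearMap.ext fun w => by simp [pairing_apply, dot3])

lemma hasFDerivAt_boost (hκ : 0 < κ) (u : R3) :
    HasFDerivAt (boost κ u)
      (pairing (-energy κ γ • u,
        (-dot3 u γ.1 / energy κ γ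
            + dot3 u (cross3 γ.2.1 γ.2.2) / (energy κ γ * (κ + energy κ γ) ^ 2)) • γ.2.1
          - (κ + energy κ γ)⁻¹ • cross3 γ.2.2 u,
        -(κ + energy κ γ)⁻¹ • cross3 u γ.2.1)) γ := by
  have hE := hasFDerivAt_energy γ hκ.ne'
  have hE0 := (energy_pos γ hκ.ne').ne'
  have hD : κ + energy κ γ ≠ 0 := (add_pos hκ (energy_pos γ hκ.ne')).ne'
  refine ((hE.neg.mul (hasFDerivAt_dot3_x γ u)).sub ((hasFDerivAt_dot3_cross3 γ u).mul
    ((hasDerivAt_inv hD).comp_hasFDerivAt γ (hE.const_add κ)))).congr_fderiv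
    (ContinuousLinearMap.ext fun w => ?_)
  simp [pairing_apply, dot3, Fin.sum_univ_three]
  field_simp
  ring

end Gradients

section Brackets

variable {κ : ℝ} (γ : Phase) (u v w z : R3)

lemma pb_momentum_momentum : pb (momentum u) (momentum v) γ = 0 := by
  rw [pb_eq_of_hasFDerivAt (hasFDerivAt_momentum γ u) (hasFDerivAt_momentum γ v)]
  simp

lemma pb_P0gen_momentum (hκ : κ ≠ 0) : pb (P0gen κ) (momentum u) γ = 0 := by
  rw [pb_eq_of_hasFDerivAt (hasFDerivAt_P0gen γ hκ) (hasFDerivAt_momentum γ u)]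
  simp

lemma pb_angularMomentum_momentum :
    pb (angularMomentum u v) (momentum w) γ =
      dot3 u w * momentum v γ - dot3 v w * momentum u γ := by
  rw [pb_eq_of_hasFDerivAt (hasFDerivAt_angularMomentum γ u v) (hasFDerivAt_momentum γ w)]
  simp [momentum, dot3, cross3, Fin.sum_univ_three]
  ring

lemma pb_angularMomentum_P0gen (hκ : κ ≠ 0) : pb (angularMomentum u v) (P0gen κ) γ = 0 := by
  rw [pb_eq_of_hasFDerivAt (hasFDerivAt_angularMomentum γ u v) (hasFDerivAt_P0gen γ hκ)]
  simp [dot3, cross3, Fin.sum_univ_three]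
  ring

lemma pb_boost_momentum (hκ : 0 < κ) :
    pb (boost κ u) (momentum w) γ = dot3 u w * P0gen κ γ := by
  rw [pb_eq_of_hasFDerivAt (hasFDerivAt_boost γ hκ u) (hasFDerivAt_momentum γ w)]
  simp [P0gen, energy, dot3, cross3, Fin.sum_univ_three]
  ring

lemma pb_boost_P0gen (hκ : 0 < κ) : pb (boost κ u) (P0gen κ) γ = momentum u γ := by
  have hE := (energy_pos γ hκ.ne').ne'
  rw [pb_eq_of_hasFDerivAt (hasFDerivAt_boost γ hκ u) (hasFDerivAt_P0gen γ hκ.ne')]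
  simp [momentum, dot3, cross3, Fin.sum_univ_three]
  field_simp

lemma pb_angularMomentum_angularMomentum :
    pb (angularMomentum u v) (angularMomentum w z) γ =
      dot3 u w * angularMomentum v z γ - dot3 v w * angularMomentum u z γ
        - dot3 u z * angularMomentum v w γ + dot3 v z * angularMomentum u w γ := by
  rw [pb_eq_of_hasFDerivAt (hasFDerivAt_angularMomentum γ u v)
    (hasFDerivAt_angularMomentum γ w z)]
  simp [angularMomentum, dot3, cross3, Fin.sum_univ_three]
  ring

lemma pb_angularMomentum_boost (hκ : 0 < κ) :
    pb (angularMomentum u v) (boost κ w) γ =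
      dot3 u w * boost κ v γ - dot3 v w * boost κ u γ := by
  rw [pb_eq_of_hasFDerivAt (hasFDerivAt_angularMomentum γ u v) (hasFDerivAt_boost γ hκ w)]
  simp [boost, dot3, cross3, Fin.sum_univ_three]
  field_simp
  ring

lemma pb_boost_boost (hκ : 0 < κ) :
    pb (boost κ u) (boost κ v) γ = -angularMomentum u v γ := by
  have hE := (energy_pos γ hκ.ne').ne'
  have hD : κ + energy κ γ ≠ 0 := (add_pos hκ (energy_pos γ hκ.ne')).ne'
  have hE2 := energy_sq κ γ
  rw [pb_eq_of_hasFDerivAt (hasFDerivAt_boost γ hκ u) (hasFDerivAt_boost γ hκ v)]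
  simp [angularMomentum, dot3, cross3, Fin.sum_univ_three] at hE2 ⊢
  field_simp
  linear_combination -(γ.2.2 0 * (u 1 * v 2 - u 2 * v 1) + γ.2.2 1 * (u 2 * v 0 - u 0 * v 2)
    + γ.2.2 2 * (u 0 * v 1 - u 1 * v 0)) * hE2

end Brackets

section Components

variable (κ : ℝ)

lemma Pgen_eq_momentum (a : Fin 3) : Pgen a = momentum (kdelta a) := by
  funext γ; simp [Pgen, momentum]

lemma Jgen_eq_angularMomentum (a b : Fin 3) :
    Jgen a b = angularMomentum (kdelta a) (kdelta b) := by
  funext γ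
  fin_cases a <;> fin_cases b <;>
    simp [Jgen, angularMomentum, eps3, isgn, dot3, cross3, kdelta, Fin.sum_univ_three]

lemma Jboost_eq_boost (a : Fin 3) : Jboost κ a = boost κ (kdelta a) := by
  funext γ; simp [Jboost, boost, P0gen, energy]

lemma angularMomentum_self (u : R3) : angularMomentum u u = fun _ => 0 := by
  funext γ; simp [angularMomentum, dot3, cross3, Fin.sum_univ_three]; ring

@[simp] lemma P4_zero : P4 κ 0 = P0gen κ := rfl

@[simp] lemma P4_succ (a : Fin 3) : P4 κ a.succ = momentum (kdelta a) := by
  rw [← Pgen_eq_momentum]; fin_cases a <;> rfl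

@[simp] lemma J4_zero_zero : J4 κ 0 0 = fun _ => 0 := rfl

@[simp] lemma J4_zero_succ (b : Fin 3) : J4 κ 0 b.succ = fun γ => -boost κ (kdelta b) γ := by
  rw [← Jboost_eq_boost]; fin_cases b <;> rfl

@[simp] lemma J4_succ_zero (a : Fin 3) : J4 κ a.succ 0 = boost κ (kdelta a) := by
  rw [← Jboost_eq_boost]; fin_cases a <;> rfl

@[simp] lemma J4_succ_succ (a b : Fin 3) :
    J4 κ a.succ b.succ = angularMomentum (kdelta a) (kdelta b) := by
  fin_cases a <;> fin_cases b <;>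
    simp [J4, ← Jgen_eq_angularMomentum, angularMomentum_self]

end Components

@[simp] lemma eta4_zero_zero : eta4 0 0 = -1 := rfl

@[simp] lemma eta4_zero_succ (b : Fin 3) : eta4 0 b.succ = 0 := by
  simp [eta4, (Fin.succ_ne_zero b).symm]

@[simp] lemma eta4_succ_zero (a : Fin 3) : eta4 a.succ 0 = 0 := by
  simp [eta4]

@[simp] lemma eta4_succ_succ (a b : Fin 3) :
    eta4 a.succ b.succ = dot3 (kdelta a) (kdelta b) := by
  simp [eta4, kdelta, eq_comm]

theorem statement14 (κ : ℝ) (hκ : 0 < κ) :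
    (∀ μ ν : Fin 4, ∀ γ : Phase, pb (P4 κ μ) (P4 κ ν) γ = 0) ∧
    (∀ μ ν ρ : Fin 4, ∀ γ : Phase,
      pb (J4 κ μ ν) (P4 κ ρ) γ = eta4 μ ρ * P4 κ ν γ - eta4 ν ρ * P4 κ μ γ) ∧
    (∀ μ ν ρ σ : Fin 4, ∀ γ : Phase,
      pb (J4 κ μ ν) (J4 κ ρ σ) γ =
        eta4 μ ρ * J4 κ ν σ γ - eta4 ν ρ * J4 κ μ σ γ
        - eta4 μ σ * J4 κ ν ρ γ + eta4 ν σ * J4 κ μ ρ γ) := by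
  refine ⟨fun μ ν γ => ?_, fun μ ν ρ γ => ?_, fun μ ν ρ σ γ => ?_⟩
  · cases μ using Fin.cases <;> cases ν using Fin.cases <;>
      simp [pb_self, pb_momentum_momentum, pb_P0gen_momentum γ _ hκ.ne',
        pb_anticomm (P0gen κ) (momentum _)]
  · cases μ using Fin.cases <;> cases ν using Fin.cases <;> cases ρ using Fin.cases <;>
      simp [pb_const_left, pb_neg_left, pb_angularMomentum_momentum,
        pb_angularMomentum_P0gen γ _ _ hκ.ne', pb_boost_momentum γ _ _ hκ, pb_boost_P0gen γ _ hκ]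
  · cases μ using Fin.cases <;> cases ν using Fin.cases <;> cases ρ using Fin.cases <;>
      cases σ using Fin.cases <;>
      simp [pb_const_left, pb_const_right, pb_neg_left, pb_neg_right, pb_self,
        pb_angularMomentum_angularMomentum, pb_angularMomentum_boost γ _ _ _ hκ,
        pb_boost_boost γ _ _ hκ, pb_anticomm (angularMomentum _ _) (boost κ _), kdelta_comm] <;>
      ring
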